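/- If (1 + ‖Q̂‖) · E_p(f̂) < ‖f^{(m+1)}‖_∞ / (m+1)!, then the uniform error of the constrained mock-Chebyshev least-squares approximant is strictly smaller than the classical Lagrange remainder bound for the interpolation error on x'_0,…,x'_m: E_{P̂_X}(f) < (‖f^{(m+1)}‖_∞ / (m+1)!) · ‖ω_m‖_∞, where the right-hand side is an upper bound for E_{P_{X'}}(f) = ‖f − P_{X'}‖_∞. -/
import Mathlib


/-- The uniform norm on `[−1, 1]`. -/
noncomputable def unifNorm (φ : ℝ → ℝ) : ℝ :=
  sSup ((fun t => |φ t|) '' Set.Icc (-1 : ℝ) 1)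

/-- `E_p(φ) = inf_{Q ∈ 𝒫^p} ‖φ − Q‖_∞`, the best uniform approximation error by
polynomials of degree `≤ p`. -/
noncomputable def Ep (p : ℕ) (φ : ℝ → ℝ) : ℝ :=
  sInf {e : ℝ | ∃ Q : Polynomial ℝ, Q.degree ≤ (p : ℕ) ∧
    e = unifNorm fun t => φ t - Q.eval t}

/-- The operator norm, induced by the uniform norm on `[−1, 1]`, of an operator
sending continuous functions to polynomials. -/
noncomputable def opNorm (T : (ℝ → ℝ) → Polynomial ℝ) : ℝ :=
  sSup {a : ℝ | ∃ φ : ℝ → ℝ, ContinuousOn φ (Set.Icc (-1 : ℝ) 1) ∧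
    unifNorm φ = 1 ∧ a = unifNorm fun t => (T φ).eval t}

open Polynomial Finset Set

lemma unifNorm_nonneg (φ : ℝ → ℝ) : 0 ≤ unifNorm φ :=
  Real.sSup_nonneg (by rintro x ⟨t, _, rfl⟩; exact abs_nonneg _)

lemma unifNorm_bdd {φ : ℝ → ℝ} (h : ContinuousOn φ (Set.Icc (-1:ℝ) 1)) :
    BddAbove ((fun t => |φ t|) '' Set.Icc (-1:ℝ) 1) :=
  ((isCompact_Icc.image_of_continuousOn (h.abs)).bddAbove)

lemma le_unifNorm {φ : ℝ → ℝ} (h : ContinuousOn φ (Set.Icc (-1:ℝ) 1)) {t : ℝ}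
    (ht : t ∈ Set.Icc (-1:ℝ) 1) : |φ t| ≤ unifNorm φ :=
  le_csSup (unifNorm_bdd h) ⟨t, ht, rfl⟩

lemma unifNorm_le {φ : ℝ → ℝ} {B : ℝ} (hB : 0 ≤ B)
    (h : ∀ t ∈ Set.Icc (-1:ℝ) 1, |φ t| ≤ B) : unifNorm φ ≤ B :=
  Real.sSup_le (by rintro x ⟨t, ht, rfl⟩; exact h t ht) hB

lemma unifNorm_const_mul_le {φ : ℝ → ℝ} (h : ContinuousOn φ (Set.Icc (-1:ℝ) 1)) (c : ℝ) :
    unifNorm (fun t => c * φ t) ≤ |c| * unifNorm φ := by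
  refine unifNorm_le (mul_nonneg (abs_nonneg _) (unifNorm_nonneg _)) fun t ht => ?_
  rw [abs_mul]
  exact mul_le_mul_of_nonneg_left (le_unifNorm h ht) (abs_nonneg _)

lemma unifNorm_const_mul {φ : ℝ → ℝ} (h : ContinuousOn φ (Set.Icc (-1:ℝ) 1)) (c : ℝ) :
    unifNorm (fun t => c * φ t) = |c| * unifNorm φ := by
  rcases eq_or_ne c 0 with rfl | hc
  · simp only [zero_mul, abs_zero]
    refine le_antisymm (unifNorm_le le_rfl (by simp)) (unifNorm_nonneg _)
  · refine le_antisymm (unifNorm_const_mul_le h c) ?_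
    have h2 : ContinuousOn (fun t => c * φ t) (Set.Icc (-1:ℝ) 1) := continuousOn_const.mul h
    have := unifNorm_const_mul_le h2 c⁻¹
    simp only [inv_mul_cancel_left₀ hc] at this
    rw [abs_inv] at this
    calc |c| * unifNorm φ ≤ |c| * (|c|⁻¹ * unifNorm fun t => c * φ t) :=
          mul_le_mul_of_nonneg_left this (abs_nonneg _)
      _ = unifNorm fun t => c * φ t := by field_simp

lemma poly_vanish {N p : ℕ} (hN : p + 1 ≤ N) (v : Fin N → ℝ) (hv : Function.Injective v)
    (P : Polynomial ℝ) (hd : P.degree ≤ (p : ℕ)) (h0 : ∀ k, P.eval (v k) = 0) : P = 0 := by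
  refine P.eq_zero_of_natDegree_lt_card_of_eval_eq_zero hv h0 ?_
  rw [Fintype.card_fin]
  exact lt_of_le_of_lt (natDegree_le_iff_degree_le.2 hd) (by omega)

lemma ls_unique {N p : ℕ} (hN : p + 1 ≤ N) (v : Fin N → ℝ) (hv : Function.Injective v)
    (w : Fin N → ℝ) (hw : ∀ k, 0 < w k) (y : Fin N → ℝ) (R₁ R₂ : Polynomial ℝ)
    (h₁d : R₁.degree ≤ (p : ℕ)) (h₂d : R₂.degree ≤ (p : ℕ))
    (h₁ : ∀ Q : Polynomial ℝ, Q.degree ≤ (p : ℕ) →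
      ∑ k, w k * (y k - R₁.eval (v k)) ^ 2 ≤ ∑ k, w k * (y k - Q.eval (v k)) ^ 2)
    (h₂ : ∀ Q : Polynomial ℝ, Q.degree ≤ (p : ℕ) →
      ∑ k, w k * (y k - R₂.eval (v k)) ^ 2 ≤ ∑ k, w k * (y k - Q.eval (v k)) ^ 2) :
    R₁ = R₂ := by
  have heq : ∑ k, w k * (y k - R₁.eval (v k)) ^ 2 = ∑ k, w k * (y k - R₂.eval (v k)) ^ 2 :=
    le_antisymm (h₁ _ h₂d) (h₂ _ h₁d)
  set R : Polynomial ℝ := (2⁻¹ : ℝ) • (R₁ + R₂) with hR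
  have hRd : R.degree ≤ (p : ℕ) :=
    le_trans (degree_smul_le _ _) (le_trans (degree_add_le _ _) (max_le h₁d h₂d))
  have hReval : ∀ t : ℝ, R.eval t = (R₁.eval t + R₂.eval t) / 2 := by
    intro t; simp [hR, smul_eq_mul]; ring
  have hterm : ∀ k ∈ Finset.univ, w k * (y k - R.eval (v k)) ^ 2 =
      (w k * (y k - R₁.eval (v k)) ^ 2 + w k * (y k - R₂.eval (v k)) ^ 2) / 2
        - w k * ((R₁.eval (v k) - R₂.eval (v k)) / 2) ^ 2 := by
    intro k _; rw [hReval]; ring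
  have hsum : ∑ k, w k * (y k - R.eval (v k)) ^ 2 =
      (∑ k, w k * (y k - R₁.eval (v k)) ^ 2 + ∑ k, w k * (y k - R₂.eval (v k)) ^ 2) / 2
        - ∑ k, w k * ((R₁.eval (v k) - R₂.eval (v k)) / 2) ^ 2 := by
    rw [Finset.sum_congr rfl hterm, Finset.sum_sub_distrib, ← Finset.sum_add_distrib,
      Finset.sum_div]
  have hmin := h₁ R hRd
  rw [hsum, ← heq] at hmin
  have hT : ∑ k, w k * ((R₁.eval (v k) - R₂.eval (v k)) / 2) ^ 2 ≤ 0 := by linarith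
  have hT0 : ∑ k, w k * ((R₁.eval (v k) - R₂.eval (v k)) / 2) ^ 2 = 0 :=
    le_antisymm hT (Finset.sum_nonneg fun k _ => mul_nonneg (hw k).le (sq_nonneg _))
  have hz : ∀ k, (R₁ - R₂).eval (v k) = 0 := by
    intro k
    have := (Finset.sum_eq_zero_iff_of_nonneg
      (fun k _ => mul_nonneg (hw k).le (sq_nonneg _))).1 hT0 k (mem_univ k)
    have h2 : ((R₁.eval (v k) - R₂.eval (v k)) / 2) ^ 2 = 0 := by
      rcases mul_eq_zero.1 this with h | h
      · exact absurd h (hw k).ne'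
      · exact h
    have := pow_eq_zero_iff (n := 2) (by norm_num) |>.1 h2
    simp only [eval_sub]
    linarith [this]
  have := poly_vanish hN v hv (R₁ - R₂) (le_trans (degree_sub_le _ _) (max_le h₁d h₂d)) hz
  exact sub_eq_zero.1 this

lemma opset_bdd {N p : ℕ} (hN : p + 1 ≤ N) (v : Fin N → ℝ) (hv : Function.Injective v)
    (hvmem : ∀ k, v k ∈ Set.Icc (-1 : ℝ) 1)
    (w : Fin N → ℝ) (hw : ∀ k, 0 < w k) (Qhat : (ℝ → ℝ) → Polynomial ℝ)
    (hQhat : ∀ φ : ℝ → ℝ, ContinuousOn φ (Set.Icc (-1 : ℝ) 1) →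
      (Qhat φ).degree ≤ (p : ℕ) ∧ ∀ Q : Polynomial ℝ, Q.degree ≤ (p : ℕ) →
        ∑ k, w k * (φ (v k) - (Qhat φ).eval (v k)) ^ 2 ≤
          ∑ k, w k * (φ (v k) - Q.eval (v k)) ^ 2) :
    BddAbove {a : ℝ | ∃ φ : ℝ → ℝ, ContinuousOn φ (Set.Icc (-1 : ℝ) 1) ∧
      unifNorm φ = 1 ∧ a = unifNorm fun t => (Qhat φ).eval t} := by
  classical
  set W : ℝ := ∑ k, w k with hW
  have hW0 : 0 < W := Finset.sum_pos (fun k _ => hw k) ⟨⟨0, by omega⟩, mem_univ _⟩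
  set s : Finset (Fin N) := Finset.image (fun i : Fin (p + 1) => Fin.castLE hN i) univ with hs
  have hscard : #s = p + 1 := by
    rw [hs, Finset.card_image_of_injective _ (Fin.castLE_injective hN), Finset.card_univ,
      Fintype.card_fin]
  set b : Fin N → ℝ := fun k => Real.sqrt (4 * W / w k) with hb
  have hbnn : ∀ k, 0 ≤ b k := fun k => Real.sqrt_nonneg _
  have hCex : ∀ i : Fin N, ∃ C : ℝ, ∀ t ∈ Set.Icc (-1 : ℝ) 1,
      |(Lagrange.basis s v i).eval t| ≤ C := by
    intro i
    obtain ⟨C, hC⟩ := isCompact_Icc.exists_bound_of_continuousOn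
      (Polynomial.continuousOn (Lagrange.basis s v i))
    exact ⟨C, fun t ht => by simpa [Real.norm_eq_abs] using hC t ht⟩
  choose C hC using hCex
  have hCnn : ∀ i, 0 ≤ C i := fun i =>
    le_trans (abs_nonneg _) (hC i 0 (by norm_num))
  refine ⟨∑ i ∈ s, b i * C i, ?_⟩
  rintro a ⟨φ, hφc, hφ1, rfl⟩
  obtain ⟨hPd, hPmin⟩ := hQhat φ hφc
  set P := Qhat φ with hPdef
  have h1 : ∀ k, |φ (v k)| ≤ 1 := fun k => hφ1 ▸ le_unifNorm hφc (hvmem k)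
  have hD0 : ∑ k, w k * (φ (v k) - P.eval (v k)) ^ 2 ≤ W := by
    refine le_trans (hPmin 0 (by simp)) ?_
    rw [hW]
    refine Finset.sum_le_sum fun k _ => ?_
    simp only [eval_zero, sub_zero]
    have ha2 : φ (v k) ^ 2 ≤ 1 := by
      nlinarith [h1 k, abs_nonneg (φ (v k)), sq_abs (φ (v k))]
    nlinarith [mul_le_mul_of_nonneg_left ha2 (hw k).le]
  have hval : ∀ k, |P.eval (v k)| ≤ b k := by
    intro k
    have hterm1 : w k * (φ (v k) - P.eval (v k)) ^ 2 ≤ W :=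
      le_trans (Finset.single_le_sum (f := fun j => w j * (φ (v j) - P.eval (v j)) ^ 2)
        (fun j _ => mul_nonneg (hw j).le (sq_nonneg _)) (mem_univ k)) hD0
    have hterm2 : w k ≤ W :=
      Finset.single_le_sum (f := w) (fun j _ => (hw j).le) (mem_univ k)
    have ha2 : φ (v k) ^ 2 ≤ 1 := by
      nlinarith [h1 k, abs_nonneg (φ (v k)), sq_abs (φ (v k))]
    have hsq : w k * (P.eval (v k)) ^ 2 ≤ 4 * W := by
      nlinarith [hterm1, hterm2, mul_nonneg (hw k).le (sq_nonneg (2 * φ (v k) - P.eval (v k))),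
        mul_le_mul_of_nonneg_left ha2 (hw k).le]
    have h2 : (P.eval (v k)) ^ 2 ≤ 4 * W / w k := by
      rw [le_div_iff₀ (hw k)]; linarith [hsq]
    calc |P.eval (v k)| = Real.sqrt ((P.eval (v k)) ^ 2) := (Real.sqrt_sq_eq_abs _).symm
      _ ≤ b k := Real.sqrt_le_sqrt h2
  have hdeglt : P.degree < (#s : ℕ) := by
    rw [hscard]
    exact lt_of_le_of_lt hPd (by exact_mod_cast Nat.lt_succ_self p)
  have hinterp := Lagrange.eq_interpolate (f := P) (v := v) (hv.injOn) hdeglt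
  refine unifNorm_le (Finset.sum_nonneg fun i _ => mul_nonneg (hbnn i) (hCnn i)) ?_
  intro t ht
  have heval : P.eval t = ∑ i ∈ s, P.eval (v i) * (Lagrange.basis s v i).eval t := by
    conv_lhs => rw [hinterp]
    simp [Lagrange.interpolate_apply, eval_finset_sum]
  rw [heval]
  refine le_trans (Finset.abs_sum_le_sum_abs _ _) (Finset.sum_le_sum fun i _ => ?_)
  rw [abs_mul]
  exact mul_le_mul (hval i) (hC i t ht) (abs_nonneg _) (hbnn i)

/-- if `(1 + ‖Q̂‖) · E_p(f̂) < ‖f^{(m+1)}‖_∞ / (m+1)!`, then the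
uniform error of the constrained mock-Chebyshev least-squares approximant is
strictly smaller than the classical Lagrange remainder bound:
`‖f − P̂_X‖_∞ < (‖f^{(m+1)}‖_∞ / (m+1)!) · ‖ω_m‖_∞`. -/
theorem constrained_mock_chebyshev_beats_lagrange_bound
    (m n r : ℕ) (hmr : m < r) (hrn : r ≤ n) (p : ℕ) (hp : p = r - m - 1)
    (hnm : p + 1 ≤ n - m)
    (x' : Fin (m + 1) → ℝ) (x'' : Fin (n - m) → ℝ)
    (hx'mono : StrictMono x') (hx''mono : StrictMono x'')
    (hx'mem : ∀ i, x' i ∈ Set.Icc (-1 : ℝ) 1)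
    (hx''mem : ∀ k, x'' k ∈ Set.Icc (-1 : ℝ) 1)
    (hdisj : ∀ i k, x' i ≠ x'' k)
    (f : ℝ → ℝ) (hf : ContDiffOn ℝ (m + 1) f (Set.Icc (-1 : ℝ) 1))
    (PX' : Polynomial ℝ) (hPX'deg : PX'.degree ≤ (m : ℕ))
    (hPX'interp : ∀ i, PX'.eval (x' i) = f (x' i))
    (ω : Polynomial ℝ)
    (hω : ω = ∏ i : Fin (m + 1), (Polynomial.X - Polynomial.C (x' i)))
    -- `f̂` is the continuous extension of `(f − P_{X'})/ω_m` to `[−1, 1]`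
    (fhat : ℝ → ℝ) (hfhatcont : ContinuousOn fhat (Set.Icc (-1 : ℝ) 1))
    (hfhat : ∀ t ∈ Set.Icc (-1 : ℝ) 1, fhat t * ω.eval t = f t - PX'.eval t)
    -- `Q̂` is the least-squares projection onto `𝒫^p` w.r.t. the weighted
    -- discrete 2-norm with weights `ω_m(x''_k)²`
    (Qhat : (ℝ → ℝ) → Polynomial ℝ)
    (hQhat : ∀ φ : ℝ → ℝ, ContinuousOn φ (Set.Icc (-1 : ℝ) 1) →
      (Qhat φ).degree ≤ (p : ℕ) ∧ ∀ Q : Polynomial ℝ, Q.degree ≤ (p : ℕ) →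
        ∑ k : Fin (n - m), (ω.eval (x'' k)) ^ 2 * (φ (x'' k) - (Qhat φ).eval (x'' k)) ^ 2 ≤
          ∑ k : Fin (n - m), (ω.eval (x'' k)) ^ 2 * (φ (x'' k) - Q.eval (x'' k)) ^ 2)
    -- the sufficient condition
    (hcond : (1 + opNorm Qhat) * Ep p fhat <
      unifNorm (iteratedDerivWithin (m + 1) f (Set.Icc (-1 : ℝ) 1)) /
        (Nat.factorial (m + 1) : ℝ)) :
    unifNorm (fun t => f t - (PX' + Qhat fhat * ω).eval t) <
      unifNorm (iteratedDerivWithin (m + 1) f (Set.Icc (-1 : ℝ) 1)) /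
        (Nat.factorial (m + 1) : ℝ) * unifNorm (fun t => ω.eval t) := by
  set M : ℝ := unifNorm (iteratedDerivWithin (m + 1) f (Set.Icc (-1 : ℝ) 1)) /
    (Nat.factorial (m + 1) : ℝ) with hM
  set w : Fin (n - m) → ℝ := fun k => (ω.eval (x'' k)) ^ 2 with hwdef
  have hvinj : Function.Injective x'' := hx''mono.injective
  have hwpos : ∀ k, 0 < w k := by
    intro k
    have hne : ω.eval (x'' k) ≠ 0 := by
      rw [hω, eval_prod]
      refine Finset.prod_ne_zero_iff.2 fun i _ => ?_
      simp only [eval_sub, eval_X, eval_C, sub_ne_zero]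
      exact fun h => hdisj i k h.symm
    exact lt_of_le_of_ne (sq_nonneg _) (Ne.symm (pow_ne_zero _ hne))
  have hbddS := opset_bdd hnm x'' hvinj hx''mem w hwpos Qhat hQhat
  have hop0 : 0 ≤ opNorm Qhat :=
    Real.sSup_nonneg (by rintro a ⟨φ, _, _, rfl⟩; exact unifNorm_nonneg _)
  set op : ℝ := opNorm Qhat with hopdef
  have h1op : (0 : ℝ) < 1 + op := by linarith
  have hωcont : ContinuousOn (fun t => ω.eval t) (Set.Icc (-1:ℝ) 1) := ω.continuousOn
  -- positivity of ‖ω‖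
  have hωne : ω ≠ 0 := by
    rw [hω]
    exact (monic_prod_of_monic _ _ fun i _ => monic_X_sub_C (x' i)).ne_zero
  have hωpos : 0 < unifNorm (fun t => ω.eval t) := by
    obtain ⟨t, ht, htne⟩ : ∃ t ∈ Set.Icc (-1:ℝ) 1, ω.eval t ≠ 0 := by
      by_contra h
      push_neg at h
      have hsub : Set.Icc (-1:ℝ) 1 ⊆ {x | ω.IsRoot x} := fun t ht => h t ht
      exact (Set.Icc_infinite (by norm_num : (-1:ℝ) < 1)).mono hsub
        (Polynomial.finite_setOf_isRoot hωne)
    exact lt_of_lt_of_le (abs_pos.2 htne) (le_unifNorm hωcont ht)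
  -- Ep facts
  set SE : Set ℝ := {e : ℝ | ∃ Q : Polynomial ℝ, Q.degree ≤ (p : ℕ) ∧
    e = unifNorm fun t => fhat t - Q.eval t} with hSE
  have hSEne : SE.Nonempty := ⟨unifNorm fun t => fhat t - (0:Polynomial ℝ).eval t,
    0, by simp, rfl⟩
  have hEpdef : Ep p fhat = sInf SE := rfl
  have hEp0 : 0 ≤ Ep p fhat := by
    rw [hEpdef]
    exact Real.sInf_nonneg (by rintro e ⟨Q, _, rfl⟩; exact unifNorm_nonneg _)
  set δ : ℝ := M - (1 + op) * Ep p fhat with hδ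
  have hδ0 : 0 < δ := by rw [hδ]; linarith [hcond]
  set ε : ℝ := δ / (2 * (1 + op)) with hε
  have hε0 : 0 < ε := div_pos hδ0 (by linarith)
  obtain ⟨e, heSE, helt⟩ := Real.lt_sInf_add_pos hSEne hε0
  obtain ⟨Q, hQd, rfl⟩ := heSE
  rw [← hEpdef] at helt
  set ψ : ℝ → ℝ := fun t => fhat t - Q.eval t with hψ
  have hψc : ContinuousOn ψ (Set.Icc (-1:ℝ) 1) := hfhatcont.sub Q.continuousOn
  set c : ℝ := unifNorm ψ with hc
  have hc0 : 0 ≤ c := unifNorm_nonneg _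
  -- Claim A : Qhat ψ = Qhat fhat - Q
  have hQψd := (hQhat ψ hψc).1
  have claimA : Qhat ψ = Qhat fhat - Q := by
    refine ls_unique hnm x'' hvinj w hwpos (fun k => ψ (x'' k)) _ _ hQψd
      (le_trans (degree_sub_le _ _) (max_le (hQhat fhat hfhatcont).1 hQd))
      (fun Q' hQ'd => (hQhat ψ hψc).2 Q' hQ'd) ?_
    intro Q' hQ'd
    have h2 := (hQhat fhat hfhatcont).2 (Q' + Q)
      (le_trans (degree_add_le _ _) (max_le hQ'd hQd))
    calc ∑ k, w k * (ψ (x'' k) - (Qhat fhat - Q).eval (x'' k)) ^ 2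
        = ∑ k : Fin (n - m), (ω.eval (x'' k)) ^ 2 *
            (fhat (x'' k) - (Qhat fhat).eval (x'' k)) ^ 2 := by
          refine Finset.sum_congr rfl fun k _ => ?_
          simp only [hψ, eval_sub, hwdef]
          ring
      _ ≤ ∑ k : Fin (n - m), (ω.eval (x'' k)) ^ 2 *
            (fhat (x'' k) - (Q' + Q).eval (x'' k)) ^ 2 := h2
      _ = ∑ k, w k * (ψ (x'' k) - Q'.eval (x'' k)) ^ 2 := by
          refine Finset.sum_congr rfl fun k _ => ?_
          simp only [hψ, eval_add, hwdef]
          ring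
  -- Claim B : ‖(Qhat ψ).eval‖ ≤ op * c
  have hψnorm : unifNorm (fun t => (Qhat ψ).eval t) ≤ op * c := by
    rcases eq_or_lt_of_le hc0 with hczero | hcpos
    · -- c = 0 : ψ vanishes on [-1,1], so Qhat ψ = 0
      have hψ0 : ∀ k, ψ (x'' k) = 0 := by
        intro k
        have := le_unifNorm hψc (hx''mem k)
        rw [← hc, ← hczero] at this
        exact abs_eq_zero.1 (le_antisymm this (abs_nonneg _))
      have hQψ0 : Qhat ψ = 0 := by
        have hmin := (hQhat ψ hψc).2 0 (by simp)
        have hD0 : ∑ k : Fin (n - m), (ω.eval (x'' k)) ^ 2 *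
            (ψ (x'' k) - (Qhat ψ).eval (x'' k)) ^ 2 ≤ 0 := by
          refine le_trans hmin (le_of_eq ?_)
          refine Finset.sum_eq_zero fun k _ => ?_
          simp [hψ0 k]
        have hDz := le_antisymm hD0 (Finset.sum_nonneg fun k _ =>
          mul_nonneg (sq_nonneg _) (sq_nonneg _))
        refine poly_vanish hnm x'' hvinj _ hQψd fun k => ?_
        have := (Finset.sum_eq_zero_iff_of_nonneg (fun k _ =>
          mul_nonneg (sq_nonneg _) (sq_nonneg _))).1 hDz k (mem_univ k)
        rcases mul_eq_zero.1 this with h | h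
        · exact absurd h (hwpos k).ne'
        · have := pow_eq_zero_iff (n := 2) (by norm_num) |>.1 h
          rw [hψ0 k] at this
          linarith [this]
      rw [hQψ0, ← hczero, mul_zero]
      exact unifNorm_le le_rfl (by simp)
    · -- c > 0 : normalize
      set φ₀ : ℝ → ℝ := fun t => c⁻¹ * ψ t with hφ₀
      have hφ₀c : ContinuousOn φ₀ (Set.Icc (-1:ℝ) 1) := continuousOn_const.mul hψc
      have hφ₀1 : unifNorm φ₀ = 1 := by
        rw [hφ₀]
        rw [unifNorm_const_mul hψc c⁻¹, abs_inv, abs_of_pos hcpos, ← hc]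
        exact inv_mul_cancel₀ hcpos.ne'
      have hcc : c⁻¹ * c = 1 := inv_mul_cancel₀ hcpos.ne'
      have claimC : Qhat φ₀ = c⁻¹ • Qhat ψ := by
        refine ls_unique hnm x'' hvinj w hwpos (fun k => φ₀ (x'' k)) _ _
          (hQhat φ₀ hφ₀c).1 (le_trans (degree_smul_le _ _) hQψd)
          (fun Q' hQ'd => (hQhat φ₀ hφ₀c).2 Q' hQ'd) ?_
        intro Q' hQ'd
        have h2 := (hQhat ψ hψc).2 (c • Q') (le_trans (degree_smul_le _ _) hQ'd)
        calc ∑ k, w k * (φ₀ (x'' k) - (c⁻¹ • Qhat ψ).eval (x'' k)) ^ 2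
            = ∑ k, c⁻¹ ^ 2 * ((ω.eval (x'' k)) ^ 2 *
                (ψ (x'' k) - (Qhat ψ).eval (x'' k)) ^ 2) := by
              refine Finset.sum_congr rfl fun k _ => ?_
              simp only [hφ₀, eval_smul, smul_eq_mul, hwdef]
              ring
          _ ≤ ∑ k, c⁻¹ ^ 2 * ((ω.eval (x'' k)) ^ 2 *
                (ψ (x'' k) - (c • Q').eval (x'' k)) ^ 2) := by
              rw [← Finset.mul_sum, ← Finset.mul_sum]
              exact mul_le_mul_of_nonneg_left h2 (sq_nonneg _)
          _ = ∑ k, w k * (φ₀ (x'' k) - Q'.eval (x'' k)) ^ 2 := by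
              refine Finset.sum_congr rfl fun k _ => ?_
              simp only [hφ₀, eval_smul, smul_eq_mul, hwdef]
              have : c⁻¹ * (ψ (x'' k) - c * Q'.eval (x'' k))
                  = c⁻¹ * ψ (x'' k) - Q'.eval (x'' k) := by
                rw [mul_sub, ← mul_assoc, hcc, one_mul]
              calc c⁻¹ ^ 2 * ((ω.eval (x'' k)) ^ 2 *
                    (ψ (x'' k) - c * Q'.eval (x'' k)) ^ 2)
                  = (ω.eval (x'' k)) ^ 2 *
                    (c⁻¹ * (ψ (x'' k) - c * Q'.eval (x'' k))) ^ 2 := by ring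
                _ = (ω.eval (x'' k)) ^ 2 * (c⁻¹ * ψ (x'' k) - Q'.eval (x'' k)) ^ 2 := by
                    rw [this]
      have haop : unifNorm (fun t => (Qhat φ₀).eval t) ≤ op :=
        le_csSup hbddS ⟨φ₀, hφ₀c, hφ₀1, rfl⟩
      have heval : (fun t => (Qhat ψ).eval t) = fun t => c * (Qhat φ₀).eval t := by
        funext t
        rw [claimC, eval_smul, smul_eq_mul, ← mul_assoc, mul_inv_cancel₀ hcpos.ne', one_mul]
      rw [heval, unifNorm_const_mul (Polynomial.continuousOn _) c, abs_of_pos hcpos]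
      calc c * unifNorm (fun t => (Qhat φ₀).eval t) ≤ c * op :=
            mul_le_mul_of_nonneg_left haop hc0
        _ = op * c := mul_comm _ _
  -- triangle inequality and conclusion
  have hkey : unifNorm (fun t => fhat t - (Qhat fhat).eval t) < M := by
    have htri : unifNorm (fun t => fhat t - (Qhat fhat).eval t) ≤ c + op * c := by
      refine unifNorm_le (by nlinarith) fun t ht => ?_
      have e1 : |ψ t| ≤ c := le_unifNorm hψc ht
      have e2 : |(Qhat ψ).eval t| ≤ op * c :=
        le_trans (le_unifNorm (Polynomial.continuousOn _) ht) hψnorm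
      have hrw : fhat t - (Qhat fhat).eval t = ψ t - (Qhat ψ).eval t := by
        rw [claimA, eval_sub, hψ]; ring
      rw [hrw]
      calc |ψ t - (Qhat ψ).eval t| ≤ |ψ t| + |(Qhat ψ).eval t| := abs_sub _ _
        _ ≤ c + op * c := add_le_add e1 e2
    have hεcalc : (1 + op) * ε = δ / 2 := by
      rw [hε]; field_simp
    have : c + op * c = (1 + op) * c := by ring
    have hlt : (1 + op) * c < (1 + op) * (Ep p fhat + ε) :=
      mul_lt_mul_of_pos_left helt h1op
    have : (1 + op) * (Ep p fhat + ε) = M - δ / 2 := by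
      rw [mul_add, hεcalc, hδ]; ring
    linarith [htri, hlt]
  -- final estimate
  have hNc : ContinuousOn (fun t => fhat t - (Qhat fhat).eval t) (Set.Icc (-1:ℝ) 1) :=
    hfhatcont.sub (Polynomial.continuousOn _)
  have hfinal : unifNorm (fun t => f t - (PX' + Qhat fhat * ω).eval t) ≤
      unifNorm (fun t => fhat t - (Qhat fhat).eval t) * unifNorm (fun t => ω.eval t) := by
    refine unifNorm_le (mul_nonneg (unifNorm_nonneg _) (unifNorm_nonneg _)) fun t ht => ?_
    have hid : f t - (PX' + Qhat fhat * ω).eval t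
        = (fhat t - (Qhat fhat).eval t) * ω.eval t := by
      simp only [eval_add, eval_mul]
      linear_combination - hfhat t ht
    rw [hid, abs_mul]
    exact mul_le_mul (le_unifNorm hNc ht) (le_unifNorm hωcont ht) (abs_nonneg _)
      (unifNorm_nonneg _)
  calc unifNorm (fun t => f t - (PX' + Qhat fhat * ω).eval t)
      ≤ unifNorm (fun t => fhat t - (Qhat fhat).eval t) * unifNorm (fun t => ω.eval t) :=
        hfinal
    _ < M * unifNorm (fun t => ω.eval t) := mul_lt_mul_of_pos_right hkey hωpos
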